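/- arXiv:2402.06767 — 2 statements merged into one kernel-verified Lean document; each statement's English description precedes it below -/
import Mathlib

section
/- Every minimum-weight codeword of a 2-dimensional product code is the Kronecker (outer) product of a minimum-weight codeword of C₁ and a minimum-weight codeword of C₂; consequently the number of codewords of weight d₁d₂ in the product code equals A^{(1)}_{d₁} · A^{(2)}_{d₂}. -/
/-!
Let `M` be a nonzero product codeword of weight at most `d₁ d₂`. Every nonzero column has weight
at least `d₁` and is supported on the nonzero rows, so there are at least `d₁` nonzero rows; each
of them has weight at least `d₂`, so the weight is at least `d₁ d₂`. Equality forces exactly `d₁`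
nonzero rows, each of weight `d₂`, and symmetrically exactly `d₂` nonzero columns. A nonzero row
is supported on the `d₂` nonzero columns and has weight `d₂`, so its support is all of them: the
support of `M` is a rectangle. Over `GF(2)` a vector is determined by its support, so `M` is the
outer product of any of its nonzero columns with any of its nonzero rows. Conversely the outer
product of two nonzero vectors determines both factors over `GF(2)`, which gives the count.
-/

open Finset Matrix

section Weight

variable {m n α : Type*} [Fintype m] [Fintype n] [Zero α] [DecidableEq α]

theorem hammingNorm_uncurry_eq_sum_rows (M : Matrix m n α) :
    hammingNorm (fun p : m × n => M p.1 p.2) = ∑ i, hammingNorm (M.row i) := by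
  simp only [hammingNorm, card_filter, Fintype.sum_prod_type]
  rfl

theorem hammingNorm_uncurry_transpose (M : Matrix m n α) :
    hammingNorm (fun p : n × m => Mᵀ p.1 p.2) = hammingNorm (fun p : m × n => M p.1 p.2) :=
  card_equiv (Equiv.prodComm n m) fun _ => by simp only [mem_filter_univ]; rfl

theorem hammingNorm_col_le_card_nonzero_rows (M : Matrix m n α) (j : n) :
    hammingNorm (M.col j) ≤ #{i | M.row i ≠ 0} :=
  card_le_card fun i hi => by
    rw [mem_filter_univ] at hi ⊢
    exact fun h => hi (congrFun h j)

theorem card_nonzero_rows_mul_le {b : ℕ} {M : Matrix m n α}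
    (hrow : ∀ i, M.row i ≠ 0 → b ≤ hammingNorm (M.row i)) :
    #{i | M.row i ≠ 0} * b ≤ hammingNorm (fun p : m × n => M p.1 p.2) := by
  rw [hammingNorm_uncurry_eq_sum_rows, ← smul_eq_mul]
  calc #{i | M.row i ≠ 0} • b ≤ ∑ i with M.row i ≠ 0, hammingNorm (M.row i) :=
        card_nsmul_le_sum _ _ _ fun i hi => hrow i (mem_filter.mp hi).2
    _ ≤ ∑ i, hammingNorm (M.row i) := sum_le_sum_of_subset (subset_univ _)

theorem card_nonzero_rows_eq_of_hammingNorm_le {a b : ℕ} {M : Matrix m n α} (hM : M ≠ 0)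
    (hrow : ∀ i, M.row i ≠ 0 → b ≤ hammingNorm (M.row i))
    (hcol : ∀ j, M.col j ≠ 0 → a ≤ hammingNorm (M.col j))
    (hw : hammingNorm (fun p : m × n => M p.1 p.2) ≤ a * b) :
    #{i | M.row i ≠ 0} = a := by
  obtain ⟨j, hj⟩ : ∃ j, M.col j ≠ 0 := by
    by_contra! h
    exact hM (transpose_injective (funext h))
  have hw_pos : 0 < hammingNorm (fun p : m × n => M p.1 p.2) :=
    hammingNorm_pos_iff.mpr fun h => hM (funext₂ fun i j => congrFun h (i, j))
  have hb : 0 < b := Nat.pos_of_mul_pos_left (hw_pos.trans_le hw)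
  exact le_antisymm
    (Nat.le_of_mul_le_mul_right ((card_nonzero_rows_mul_le hrow).trans hw) hb)
    ((hcol j hj).trans (hammingNorm_col_le_card_nonzero_rows M j))

theorem support_row_eq_nonzero_cols {b : ℕ} {M : Matrix m n α}
    (hrow : ∀ i, M.row i ≠ 0 → b ≤ hammingNorm (M.row i)) (hcols : #{j | M.col j ≠ 0} = b)
    {i : m} (hi : M.row i ≠ 0) :
    ({j | M.row i j ≠ 0} : Finset n) = ({j | M.col j ≠ 0} : Finset n) := by
  refine eq_of_subset_of_card_le (fun j hj => ?_) (hcols ▸ hrow i hi)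
  rw [mem_filter_univ] at hj ⊢
  exact fun h => hj (congrFun h i)

end Weight

theorem ZMod.eq_of_ne_zero_iff_ne_zero {a b : ZMod 2} (h : a ≠ 0 ↔ b ≠ 0) : a = b := by
  revert a b
  decide

section Binary

variable {m n : Type*} [Fintype m] [Fintype n]

theorem exists_eq_vecMulVec_col_row_of_hammingNorm_le {a b : ℕ} {M : Matrix m n (ZMod 2)}
    (hM : M ≠ 0) (hrow : ∀ i, M.row i ≠ 0 → b ≤ hammingNorm (M.row i))
    (hcol : ∀ j, M.col j ≠ 0 → a ≤ hammingNorm (M.col j))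
    (hw : hammingNorm (fun p : m × n => M p.1 p.2) ≤ a * b) :
    ∃ j i, hammingNorm (M.col j) = a ∧ hammingNorm (M.row i) = b ∧
      M = vecMulVec (M.col j) (M.row i) := by
  have hrows : #{i | M.row i ≠ 0} = a := card_nonzero_rows_eq_of_hammingNorm_le hM hrow hcol hw
  have hcols : #{j | M.col j ≠ 0} = b :=
    card_nonzero_rows_eq_of_hammingNorm_le (M := Mᵀ) (mt transpose_eq_zero.mp hM) hcol hrow
      (by rwa [hammingNorm_uncurry_transpose, mul_comm])
  have hrow_supp {i} (hi : M.row i ≠ 0) (j : n) : M i j ≠ 0 ↔ M.col j ≠ 0 := by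
    have h := Finset.ext_iff.mp (support_row_eq_nonzero_cols hrow hcols hi) j
    rwa [mem_filter_univ, mem_filter_univ] at h
  have hcol_supp {j} (hj : M.col j ≠ 0) (i : m) : M i j ≠ 0 ↔ M.row i ≠ 0 := by
    have h := Finset.ext_iff.mp (support_row_eq_nonzero_cols (M := Mᵀ) hcol hrows hj) i
    rwa [mem_filter_univ, mem_filter_univ] at h
  obtain ⟨i₀, hi₀⟩ : ∃ i, M.row i ≠ 0 := by
    by_contra! h
    exact hM (funext h)
  obtain ⟨j₀, hj₀⟩ : ∃ j, M.col j ≠ 0 := by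
    by_contra! h
    exact hM (transpose_injective (funext h))
  refine ⟨j₀, i₀,
    (congrArg card (support_row_eq_nonzero_cols (M := Mᵀ) hcol hrows hj₀)).trans hrows,
    (congrArg card (support_row_eq_nonzero_cols hrow hcols hi₀)).trans hcols, ?_⟩
  ext i j
  refine ZMod.eq_of_ne_zero_iff_ne_zero ?_
  rw [vecMulVec_apply, mul_ne_zero_iff, col_apply, row_apply, hrow_supp hi₀]
  by_cases hi : M.row i = 0
  · simp [show ∀ j, M i j = 0 from congrFun hi]
  · rw [hrow_supp hi, hcol_supp hj₀]
    exact (and_iff_right hi).symm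

end Binary

section ProductCode

variable {m n R : Type*}

theorem row_vecMulVec_ne_zero_iff [Semiring R] [IsDomain R] {v : n → R} (hv : v ≠ 0)
    (u : m → R) (i : m) : (vecMulVec u v).row i ≠ 0 ↔ u i ≠ 0 := by
  rw [row_vecMulVec]
  exact smul_ne_zero_iff_left hv

theorem hammingNorm_vecMulVec [Fintype m] [Fintype n] [MulZeroClass R] [NoZeroDivisors R]
    [DecidableEq R] (u : m → R) (v : n → R) :
    hammingNorm (fun p : m × n => vecMulVec u v p.1 p.2) = hammingNorm u * hammingNorm v := by
  simp only [hammingNorm, vecMulVec_apply, mul_ne_zero_iff, ← card_product]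
  congr 1
  ext
  simp

theorem vecMulVec_injOn_ne_zero :
    Set.InjOn (fun p : (m → ZMod 2) × (n → ZMod 2) => vecMulVec p.1 p.2)
      ({u | u ≠ 0} ×ˢ {v | v ≠ 0}) := by
  rintro ⟨u, v⟩ ⟨hu, hv⟩ ⟨u', v'⟩ ⟨hu', hv'⟩ h
  have hvv : vecMulVec v u = vecMulVec v' u' := by
    simpa only [transpose_vecMulVec] using congrArg transpose h
  have hsupp_u (i : m) : u i ≠ 0 ↔ u' i ≠ 0 := by
    rw [← row_vecMulVec_ne_zero_iff hv, ← row_vecMulVec_ne_zero_iff hv' u']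
    exact Iff.of_eq (congrArg (fun M : Matrix m n (ZMod 2) => M.row i ≠ 0) h)
  have hsupp_v (j : n) : v j ≠ 0 ↔ v' j ≠ 0 := by
    rw [← row_vecMulVec_ne_zero_iff hu, ← row_vecMulVec_ne_zero_iff hu' v', hvv]
  exact Prod.ext (funext fun i => ZMod.eq_of_ne_zero_iff_ne_zero (hsupp_u i))
    (funext fun j => ZMod.eq_of_ne_zero_iff_ne_zero (hsupp_v j))

def productCode [Semiring R] (C₁ : Submodule R (m → R)) (C₂ : Submodule R (n → R)) :
    Submodule R (Matrix m n R) where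
  carrier := {M | (∀ i, M.row i ∈ C₂) ∧ ∀ j, M.col j ∈ C₁}
  add_mem' hM hN := ⟨fun i => C₂.add_mem (hM.1 i) (hN.1 i), fun j => C₁.add_mem (hM.2 j) (hN.2 j)⟩
  zero_mem' := ⟨fun _ => C₂.zero_mem, fun _ => C₁.zero_mem⟩
  smul_mem' c _ hM := ⟨fun i => C₂.smul_mem c (hM.1 i), fun j => C₁.smul_mem c (hM.2 j)⟩

theorem vecMulVec_mem_productCode [CommSemiring R] {C₁ : Submodule R (m → R)}
    {C₂ : Submodule R (n → R)} {u : m → R} {v : n → R} (hu : u ∈ C₁) (hv : v ∈ C₂) :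
    vecMulVec u v ∈ productCode C₁ C₂ :=
  ⟨fun i => by rw [row_vecMulVec]; exact C₂.smul_mem _ hv,
    fun j => by rw [← row_transpose, transpose_vecMulVec, row_vecMulVec]; exact C₁.smul_mem _ hu⟩

end ProductCode

section MinimumWeight

variable {m n : Type*} [Fintype m] [Fintype n]

theorem pos_of_isLeast_hammingNorm {ι R : Type*} [Fintype ι] [Semiring R] [DecidableEq R]
    {C : Submodule R (ι → R)} {d : ℕ} (hd : IsLeast {w | ∃ c ∈ C, c ≠ 0 ∧ hammingNorm c = w} d) :
    0 < d := by
  obtain ⟨c, -, hc, rfl⟩ := hd.1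
  exact hammingNorm_pos_iff.mpr hc

theorem exists_eq_vecMulVec_of_mem_productCode {C₁ : Submodule (ZMod 2) (m → ZMod 2)}
    {C₂ : Submodule (ZMod 2) (n → ZMod 2)} {d₁ d₂ : ℕ}
    (hd₁ : IsLeast {w | ∃ c ∈ C₁, c ≠ 0 ∧ hammingNorm c = w} d₁)
    (hd₂ : IsLeast {w | ∃ c ∈ C₂, c ≠ 0 ∧ hammingNorm c = w} d₂)
    {M : Matrix m n (ZMod 2)} (hM : M ∈ productCode C₁ C₂)
    (hw : hammingNorm (fun p : m × n => M p.1 p.2) = d₁ * d₂) :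
    ∃ u ∈ C₁, ∃ v ∈ C₂, hammingNorm u = d₁ ∧ hammingNorm v = d₂ ∧ M = vecMulVec u v := by
  have hM₀ : M ≠ 0 := by
    rintro rfl
    exact (Nat.mul_pos (pos_of_isLeast_hammingNorm hd₁) (pos_of_isLeast_hammingNorm hd₂)).ne'
      (hw.symm.trans (hammingNorm_eq_zero.mpr rfl))
  obtain ⟨j, i, hu, hv, hMuv⟩ := exists_eq_vecMulVec_col_row_of_hammingNorm_le hM₀
    (fun i hi => hd₂.2 ⟨_, hM.1 i, hi, rfl⟩) (fun j hj => hd₁.2 ⟨_, hM.2 j, hj, rfl⟩) hw.le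
  exact ⟨_, hM.2 j, _, hM.1 i, hu, hv, hMuv⟩

theorem ncard_minWeight_productCode {C₁ : Submodule (ZMod 2) (m → ZMod 2)}
    {C₂ : Submodule (ZMod 2) (n → ZMod 2)} {d₁ d₂ : ℕ}
    (hd₁ : IsLeast {w | ∃ c ∈ C₁, c ≠ 0 ∧ hammingNorm c = w} d₁)
    (hd₂ : IsLeast {w | ∃ c ∈ C₂, c ≠ 0 ∧ hammingNorm c = w} d₂) :
    {M : Matrix m n (ZMod 2) | M ∈ productCode C₁ C₂ ∧
        hammingNorm (fun p : m × n => M p.1 p.2) = d₁ * d₂}.ncard =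
      {u | u ∈ C₁ ∧ hammingNorm u = d₁}.ncard * {v | v ∈ C₂ ∧ hammingNorm v = d₂}.ncard := by
  have himage : {M : Matrix m n (ZMod 2) | M ∈ productCode C₁ C₂ ∧
      hammingNorm (fun p : m × n => M p.1 p.2) = d₁ * d₂} =
      (fun p => vecMulVec p.1 p.2) ''
        ({u | u ∈ C₁ ∧ hammingNorm u = d₁} ×ˢ {v | v ∈ C₂ ∧ hammingNorm v = d₂}) := by
    ext M
    constructor
    · rintro ⟨hM, hw⟩
      obtain ⟨u, hu, v, hv, hnu, hnv, rfl⟩ := exists_eq_vecMulVec_of_mem_productCode hd₁ hd₂ hM hw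
      exact ⟨(u, v), ⟨⟨hu, hnu⟩, hv, hnv⟩, rfl⟩
    · rintro ⟨⟨u, v⟩, ⟨⟨hu, rfl⟩, hv, rfl⟩, rfl⟩
      exact ⟨vecMulVec_mem_productCode hu hv, hammingNorm_vecMulVec u v⟩
  have hinj : Set.InjOn (fun p => vecMulVec p.1 p.2)
      ({u | u ∈ C₁ ∧ hammingNorm u = d₁} ×ˢ {v | v ∈ C₂ ∧ hammingNorm v = d₂}) :=
    vecMulVec_injOn_ne_zero.mono fun _ ⟨⟨_, hu⟩, _, hv⟩ => Set.mk_mem_prod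
      (hammingNorm_pos_iff.mp (hu ▸ pos_of_isLeast_hammingNorm hd₁))
      (hammingNorm_pos_iff.mp (hv ▸ pos_of_isLeast_hammingNorm hd₂))
  rw [himage, hinj.ncard_image, Set.ncard_prod]

end MinimumWeight

/-- Every minimum-weight codeword of a 2-dimensional product code is the outer
(Kronecker) product of minimum-weight codewords of the component codes; consequently
the number of codewords of weight `d₁*d₂` equals `A⁽¹⁾_{d₁} * A⁽²⁾_{d₂}`. -/
theorem product_code_min_weight_codewords {N₁ N₂ d₁ d₂ : ℕ}
    (C₁ : Submodule (ZMod 2) (Fin N₁ → ZMod 2)) (C₂ : Submodule (ZMod 2) (Fin N₂ → ZMod 2))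
    (hd₁ : IsLeast {w | ∃ c ∈ C₁, c ≠ 0 ∧ hammingNorm c = w} d₁)
    (hd₂ : IsLeast {w | ∃ c ∈ C₂, c ≠ 0 ∧ hammingNorm c = w} d₂) :
    (∀ M : Matrix (Fin N₁) (Fin N₂) (ZMod 2),
      ((∀ i, M i ∈ C₂) ∧ (∀ j, (fun i => M i j) ∈ C₁)) →
      hammingNorm (fun p : Fin N₁ × Fin N₂ => M p.1 p.2) = d₁ * d₂ →
      ∃ u ∈ C₁, ∃ v ∈ C₂, hammingNorm u = d₁ ∧ hammingNorm v = d₂ ∧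
        M = fun i j => u i * v j) ∧
    {M : Matrix (Fin N₁) (Fin N₂) (ZMod 2) |
        ((∀ i, M i ∈ C₂) ∧ (∀ j, (fun i => M i j) ∈ C₁)) ∧
        hammingNorm (fun p : Fin N₁ × Fin N₂ => M p.1 p.2) = d₁ * d₂}.ncard =
      {u | u ∈ C₁ ∧ hammingNorm u = d₁}.ncard * {v | v ∈ C₂ ∧ hammingNorm v = d₂}.ncard :=
  ⟨fun _ hM hw => exists_eq_vecMulVec_of_mem_productCode hd₁ hd₂ hM hw,
    ncard_minWeight_productCode hd₁ hd₂⟩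
end

section
/- If P₁ and P₂ are SC-aimed precoding matrices (each row's leading 1 is the only nonzero entry in its column, and the column indices of leading 1s are strictly increasing down the rows), then the Kronecker product P₁ ⊗ P₂ is also SC-aimed. -/
open Matrix

/-- A matrix `P` over GF(2), with linearly ordered row and column index types, is
SC-aimed if there is a strictly increasing map `c` picking, for each row `i`, the
column `c i` of its leading (first) nonzero entry, such that this leading entry is the
only nonzero entry of column `c i`. -/
def SCAimed {ι κ : Type*} [LinearOrder ι] [LinearOrder κ]
    (P : Matrix ι κ (ZMod 2)) : Prop :=
  ∃ c : ι → κ, StrictMono c ∧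
    ∀ i : ι, P i (c i) ≠ 0 ∧ (∀ j, j < c i → P i j = 0) ∧ (∀ r, P r (c i) ≠ 0 → r = i)

/-- If `P₁` and `P₂` are SC-aimed precoding matrices, then their Kronecker product
(with rows and columns ordered lexicographically, i.e., row-major) is SC-aimed. -/
theorem scAimed_kronecker {k₁ N₁ k₂ N₂ : ℕ}
    (P₁ : Matrix (Fin k₁) (Fin N₁) (ZMod 2)) (P₂ : Matrix (Fin k₂) (Fin N₂) (ZMod 2))
    (h₁ : SCAimed P₁) (h₂ : SCAimed P₂) :
    SCAimed (fun (i : Lex (Fin k₁ × Fin k₂)) (j : Lex (Fin N₁ × Fin N₂)) =>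
      P₁ (ofLex i).1 (ofLex j).1 * P₂ (ofLex i).2 (ofLex j).2) := by
  obtain ⟨c₁, hc₁, hP₁⟩ := h₁
  obtain ⟨c₂, hc₂, hP₂⟩ := h₂
  refine ⟨fun i => toLex (c₁ (ofLex i).1, c₂ (ofLex i).2), ?_, ?_⟩
  · intro a b hab
    rcases Prod.lex_def.mp hab with h | ⟨h1, h2⟩
    · exact Prod.lex_def.mpr (Or.inl (hc₁ h))
    · exact Prod.lex_def.mpr (Or.inr ⟨congrArg c₁ h1, hc₂ h2⟩)
  · intro i
    refine ⟨mul_ne_zero (hP₁ (ofLex i).1).1 (hP₂ (ofLex i).2).1, ?_, ?_⟩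
    · intro j hj
      rcases Prod.lex_def.mp hj with h | ⟨h1, h2⟩
      · exact mul_eq_zero_of_left ((hP₁ (ofLex i).1).2.1 _ h) _
      · exact mul_eq_zero_of_right _ ((hP₂ (ofLex i).2).2.1 _ h2)
    · intro r hr
      have h1 := (hP₁ (ofLex i).1).2.2 (ofLex r).1 (left_ne_zero_of_mul hr)
      have h2 := (hP₂ (ofLex i).2).2.2 (ofLex r).2 (right_ne_zero_of_mul hr)
      exact Prod.ext h1 h2
end
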